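/- arXiv:1104.1759 — 8 statements merged into one kernel-verified Lean document; each statement's English description precedes it below -/
import Mathlib

section
/- If B is an unbounded (with respect to eventual domination ≤*) family of infinite subsets of ω (each identified with its increasing enumeration function), then for every strictly increasing function f : ω → ω there exists x ∈ B such that x ∩ (f(n), f(n+1)) = ∅ for infinitely many n. -/
/-! If every interval `[f n, f (n + 1))` from `N` on contains a point of `x`, then `x` has at least
`m + 1` points below `f (N + m + 1)`, so its enumeration is bounded by `m ↦ f (N + m + 1)`.
Were the conclusion false, every `x ∈ B` would meet all but finitely many of the intervals, and
`m ↦ f (2 * m + 1)` would dominate the whole family. -/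

namespace Nat

variable {p : ℕ → Prop} {f : ℕ → ℕ} {N : ℕ}

theorem le_count_of_forall_exists_mem_Ico [DecidablePred p]
    (h : ∀ n ≥ N, ∃ a ∈ Set.Ico (f n) (f (n + 1)), p a) (k : ℕ) :
    k ≤ count p (f (N + k)) := by
  induction k with
  | zero => exact Nat.zero_le _
  | succ k ih =>
    obtain ⟨a, ⟨hfa, haf⟩, ha⟩ := h (N + k) (Nat.le_add_right N k)
    calc k + 1 ≤ count p (f (N + k)) + 1 := Nat.succ_le_succ ih
      _ ≤ count p a + 1 := Nat.succ_le_succ (count_monotone p hfa)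
      _ ≤ count p (f (N + (k + 1))) := count_strict_mono ha haf

theorem nth_lt_of_forall_exists_mem_Ico
    (h : ∀ n ≥ N, ∃ a ∈ Set.Ico (f n) (f (n + 1)), p a) (m : ℕ) :
    nth p m < f (N + (m + 1)) := by
  classical
  exact nth_lt_of_lt_count (le_count_of_forall_exists_mem_Ico h (m + 1))

end Nat

theorem unbounded_family_misses_intervals_general
    (B : Set (Set ℕ))
    (hunb : ¬ ∃ g : ℕ → ℕ, ∀ x ∈ B,
      ∀ᶠ n in Filter.atTop, Nat.nth (· ∈ x) n ≤ g n)
    (f : ℕ → ℕ) (hf : StrictMono f) :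
    ∃ x ∈ B, {n : ℕ | x ∩ Set.Ioo (f n) (f (n + 1)) = ∅}.Infinite := by
  by_contra! hmeets_eventually
  refine hunb ⟨fun m => f (2 * m + 1), fun x hx => ?_⟩
  obtain ⟨N, hN⟩ := (hmeets_eventually x hx).bddAbove
  have hmeet : ∀ n ≥ N + 1, ∃ a ∈ Set.Ico (f n) (f (n + 1)), a ∈ x := fun n hn => by
    have hne : (x ∩ Set.Ioo (f n) (f (n + 1))).Nonempty :=
      Set.nonempty_iff_ne_empty.2 fun hempty => by
        have := hN hempty
        omega
    obtain ⟨a, hax, ha⟩ := hne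
    exact ⟨a, Set.Ioo_subset_Ico_self ha, hax⟩
  filter_upwards [Filter.eventually_ge_atTop (N + 1)] with m hm
  exact (Nat.nth_lt_of_forall_exists_mem_Ico hmeet m).le.trans (hf.monotone (by omega))

/-- Identify an infinite set `x ⊆ ω` with its increasing enumeration `Nat.nth (· ∈ x)`.
If `B` is unbounded with respect to eventual domination, then for every strictly increasing
`f : ℕ → ℕ` there is `x ∈ B` missing the interval `(f n, f (n+1))` for infinitely many `n`. -/
theorem unbounded_family_misses_intervals
    (B : Set (Set ℕ)) (hB : ∀ x ∈ B, x.Infinite)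
    (hunb : ¬ ∃ g : ℕ → ℕ, ∀ x ∈ B,
      ∀ᶠ n in Filter.atTop, Nat.nth (· ∈ x) n ≤ g n)
    (f : ℕ → ℕ) (hf : StrictMono f) :
    ∃ x ∈ B, {n : ℕ | x ∩ Set.Ioo (f n) (f (n + 1)) = ∅}.Infinite :=
  unbounded_family_misses_intervals_general B hunb f hf
end

section
/- Every Alster space is a Hurewicz space. -/
/-- `X` is Alster if every cover of `X` by Gδ sets such that every compact subset
is contained in some member has a countable subcover. -/
def AlsterSpace (X : Type*) [TopologicalSpace X] : Prop :=
  ∀ 𝒰 : Set (Set X), (∀ S ∈ 𝒰, IsGδ S) → ⋃₀ 𝒰 = Set.univ →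
    (∀ K : Set X, IsCompact K → ∃ S ∈ 𝒰, K ⊆ S) →
    ∃ 𝒱 ⊆ 𝒰, 𝒱.Countable ∧ ⋃₀ 𝒱 = Set.univ

/-- `X` is Hurewicz if for every sequence of open covers without finite subcovers there
are finite subfamilies whose unions form a point-cofinite cover. -/
def HurewiczSpace (X : Type*) [TopologicalSpace X] : Prop :=
  ∀ 𝒰 : ℕ → Set (Set X),
    (∀ n, ∀ S ∈ 𝒰 n, IsOpen S) → (∀ n, ⋃₀ 𝒰 n = Set.univ) →
    (∀ n, ¬ ∃ F : Set (Set X), F ⊆ 𝒰 n ∧ F.Finite ∧ ⋃₀ F = Set.univ) →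
    ∃ F : ℕ → Set (Set X), (∀ n, F n ⊆ 𝒰 n ∧ (F n).Finite) ∧
      ∀ x : X, ∀ᶠ n in Filter.atTop, x ∈ ⋃₀ F n

/-!
For a compact `K` and each `n`, pick a finite `Fₙ(K) ⊆ 𝒰ₙ` covering `K`. Then
`G(K) = ⋂ₙ ⋃₀ Fₙ(K)` is a Gδ set containing `K`, so the Alster property yields compact sets
`K₀, K₁, …` with `X = ⋃ₘ G(Kₘ)`. The diagonal choice `Fₙ = ⋃_{m ≤ n} Fₙ(Kₘ)` is then finite,
and a point of `G(Kₘ)` lies in `⋃₀ Fₙ` for every `n ≥ m`.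
-/

open Set Filter TopologicalSpace

theorem IsCompact.exists_finite_subset_subset_sUnion {X : Type*} [TopologicalSpace X]
    {s : Set X} {𝒰 : Set (Set X)} (hs : IsCompact s) (h𝒰 : ∀ u ∈ 𝒰, IsOpen u)
    (hs𝒰 : s ⊆ ⋃₀ 𝒰) : ∃ F ⊆ 𝒰, F.Finite ∧ s ⊆ ⋃₀ F := by
  rw [sUnion_eq_biUnion] at hs𝒰
  obtain ⟨F, hF𝒰, hFfin, hsF⟩ := hs.elim_finite_subcover_image (c := id) h𝒰 hs𝒰
  exact ⟨F, hF𝒰, hFfin, by rwa [sUnion_eq_biUnion]⟩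

theorem exists_finite_subsets_eventually_mem_sUnion {α : Type*} {𝒰 : ℕ → Set (Set α)}
    (F : ℕ → ℕ → Set (Set α)) (hF : ∀ m n, F m n ⊆ 𝒰 n ∧ (F m n).Finite)
    (hcov : ∀ x, ∃ m, ∀ n, x ∈ ⋃₀ F m n) :
    ∃ F' : ℕ → Set (Set α), (∀ n, F' n ⊆ 𝒰 n ∧ (F' n).Finite) ∧
      ∀ x, ∀ᶠ n in atTop, x ∈ ⋃₀ F' n := by
  refine ⟨fun n => ⋃ m ∈ Iic n, F m n, fun n => ⟨?_, ?_⟩, fun x => ?_⟩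
  · exact iUnion₂_subset fun m _ => (hF m n).1
  · exact (finite_Iic n).biUnion fun m _ => (hF m n).2
  · obtain ⟨m, hm⟩ := hcov x
    filter_upwards [eventually_ge_atTop m] with n hmn
    obtain ⟨u, hu, hxu⟩ := hm n
    exact ⟨u, mem_biUnion (mem_Iic.2 hmn) hu, hxu⟩

theorem AlsterSpace.exists_seq_compacts_iUnion_eq_univ {X : Type*} [TopologicalSpace X]
    (hX : AlsterSpace X) (G : Compacts X → Set X) (hG : ∀ K, IsGδ (G K))
    (hKG : ∀ K : Compacts X, (K : Set X) ⊆ G K) :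
    ∃ K : ℕ → Compacts X, ⋃ m, G (K m) = univ := by
  have hcov : ⋃₀ range G = univ := eq_univ_of_forall fun x =>
    mem_sUnion_of_mem (hKG ⟨{x}, isCompact_singleton⟩ rfl) (mem_range_self _)
  obtain ⟨𝒱, h𝒱G, h𝒱c, h𝒱cov⟩ := hX (range G) (forall_mem_range.2 hG) hcov
    fun K hK => ⟨G ⟨K, hK⟩, mem_range_self _, hKG ⟨K, hK⟩⟩
  obtain ⟨V, hVG, hVcov⟩ := (exists_seq_cover_iff_countable ⟨_, mem_range_self ⊥⟩).2
    ⟨𝒱, h𝒱c, h𝒱G, h𝒱cov⟩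
  choose K hK using hVG
  exact ⟨K, by simpa only [hK] using hVcov⟩

/-- Every Alster space is Hurewicz. -/
theorem alster_implies_hurewicz {X : Type*} [TopologicalSpace X]
    (hX : AlsterSpace X) : HurewiczSpace X := by
  intro 𝒰 hopen hcov _
  choose F hF𝒰 hFfin hKF using fun (K : Compacts X) n =>
    K.isCompact.exists_finite_subset_subset_sUnion (hopen n) ((hcov n).symm ▸ subset_univ _)
  obtain ⟨K, hK⟩ := hX.exists_seq_compacts_iUnion_eq_univ (fun K => ⋂ n, ⋃₀ F K n)
    (fun K => .iInter_of_isOpen fun n => isOpen_sUnion fun u hu => hopen n u (hF𝒰 K n hu))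
    (fun K => subset_iInter (hKF K))
  refine exists_finite_subsets_eventually_mem_sUnion (fun m n => F (K m) n)
    (fun m n => ⟨hF𝒰 (K m) n, hFfin (K m) n⟩) fun x => ?_
  obtain ⟨m, hm⟩ := mem_iUnion.1 (hK ▸ mem_univ x)
  exact ⟨m, mem_iInter.1 hm⟩
end

section
/- Every γ-space is a Hurewicz space. -/
/-!
Replacing every cover by the family of its finite unions turns it into an ω-cover. A first
application of the γ-property, to the finite unions of `𝒰 0`, gives an increasing sequence
`R n` of proper open sets that eventually contains every point. A second application, to the
ω-cover of all sets `R n ∩ V 0 ∩ ⋯ ∩ V n` with `V i` a finite union from `𝒰 i`, gives a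
γ-sequence whose levels `n` are unbounded, because its members of level at most `m` all lie in
the proper subset `R m`. Reading off `V n` from a member of level at least `n` yields the
finite selections.
-/

/-- `𝒰` is an ω-cover of `X`: `X ∉ 𝒰`, all members open, and every finite subset of `X`
is contained in some member. -/
def IsOmegaCover {X : Type*} [TopologicalSpace X] (𝒰 : Set (Set X)) : Prop :=
  Set.univ ∉ 𝒰 ∧ (∀ U ∈ 𝒰, IsOpen U) ∧
    ∀ F : Set X, F.Finite → ∃ U ∈ 𝒰, F ⊆ U

/-- `X` is a γ-space: every ω-cover contains a point-cofinite subfamily `{Uₙ}`. -/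
def GammaSpace (X : Type*) [TopologicalSpace X] : Prop :=
  ∀ 𝒰 : Set (Set X), IsOmegaCover 𝒰 →
    ∃ U : ℕ → Set X, (∀ n, U n ∈ 𝒰) ∧
      ∀ x : X, ∀ᶠ n in Filter.atTop, x ∈ U n

open Set Filter

section

variable {X : Type*}

def finiteUnions (𝒰 : Set (Set X)) : Set (Set X) :=
  {S | ∃ F ⊆ 𝒰, F.Finite ∧ ⋃₀ F = S}

lemma union_mem_finiteUnions {𝒰 : Set (Set X)} {S T : Set X} (hS : S ∈ finiteUnions 𝒰)
    (hT : T ∈ finiteUnions 𝒰) : S ∪ T ∈ finiteUnions 𝒰 := by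
  obtain ⟨F, hF𝒰, hF, rfl⟩ := hS
  obtain ⟨G, hG𝒰, hG, rfl⟩ := hT
  exact ⟨F ∪ G, union_subset hF𝒰 hG𝒰, hF.union hG, sUnion_union F G⟩

variable [TopologicalSpace X]

lemma isOmegaCover_finiteUnions {𝒰 : Set (Set X)} (hopen : ∀ U ∈ 𝒰, IsOpen U)
    (hcov : ⋃₀ 𝒰 = univ) (hnofin : ¬ ∃ F : Set (Set X), F ⊆ 𝒰 ∧ F.Finite ∧ ⋃₀ F = univ) :
    IsOmegaCover (finiteUnions 𝒰) := by
  refine ⟨fun ⟨F, hF𝒰, hF, hFX⟩ => hnofin ⟨F, hF𝒰, hF, hFX⟩, ?_, fun A hA => ?_⟩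
  · rintro _ ⟨F, hF𝒰, -, rfl⟩
    exact isOpen_sUnion fun U hU => hopen U (hF𝒰 hU)
  · choose U hU𝒰 hxU using sUnion_eq_univ_iff.1 hcov
    exact ⟨⋃₀ (U '' A), ⟨U '' A, image_subset_iff.2 fun x _ => hU𝒰 x, hA.image U, rfl⟩,
      fun x hx => ⟨U x, mem_image_of_mem U hx, hxU x⟩⟩

lemma GammaSpace.exists_monotone_eventually_mem (hX : GammaSpace X) {𝒱 : Set (Set X)}
    (h𝒱 : IsOmegaCover 𝒱) (hunion : ∀ S ∈ 𝒱, ∀ T ∈ 𝒱, S ∪ T ∈ 𝒱) :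
    ∃ R : ℕ → Set X, Monotone R ∧ (∀ n, R n ∈ 𝒱) ∧ ∀ x, ∀ᶠ n in atTop, x ∈ R n := by
  obtain ⟨U, hU𝒱, hU⟩ := hX 𝒱 h𝒱
  refine ⟨accumulate U, monotone_accumulate, fun n => ?_,
    fun x => (hU x).mono fun n hx => subset_accumulate hx⟩
  induction n with
  | zero => simpa only [accumulate_zero_nat] using hU𝒱 0
  | succ n ih => simpa only [accumulate_succ] using hunion _ ih _ (hU𝒱 (n + 1))

/-- A member built from `n` has level `n`; the factor `R n` is what forces the levels of a
γ-sequence in this cover to be unbounded. -/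
def levelCover (R : ℕ → Set X) (𝒱 : ℕ → Set (Set X)) : Set (Set X) :=
  {S | ∃ n, ∃ V : ℕ → Set X, (∀ i, V i ∈ 𝒱 i) ∧ S = R n ∩ ⋂ i ≤ n, V i}

lemma isOmegaCover_levelCover {R : ℕ → Set X} {𝒱 : ℕ → Set (Set X)}
    (hR_open : ∀ n, IsOpen (R n)) (hR_ne : ∀ n, R n ≠ univ) (hR : ∀ x, ∀ᶠ n in atTop, x ∈ R n)
    (h𝒱 : ∀ i, IsOmegaCover (𝒱 i)) : IsOmegaCover (levelCover R 𝒱) := by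
  refine ⟨?_, ?_, fun A hA => ?_⟩
  · rintro ⟨n, V, -, hRV⟩
    exact hR_ne n (univ_subset_iff.1 (hRV.trans_subset inter_subset_left))
  · rintro _ ⟨n, V, hV, rfl⟩
    exact (hR_open n).inter ((finite_Iic n).isOpen_biInter fun i _ => (h𝒱 i).2.1 _ (hV i))
  · obtain ⟨n, hAR⟩ := ((eventually_all_finite hA).2 fun x _ => hR x).exists
    choose V hV hAV using fun i => (h𝒱 i).2.2 A hA
    exact ⟨_, ⟨n, V, hV, rfl⟩, subset_inter hAR (subset_iInter₂ fun i _ => hAV i)⟩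

lemma exists_ge_level_le {α : Type*} {R : ℕ → Set α} (hR_mono : Monotone R)
    (hR_ne : ∀ n, R n ≠ univ) {S : ℕ → Set α} {ℓ : ℕ → ℕ} (hS : ∀ k, S k ⊆ R (ℓ k))
    (hS_cof : ∀ x, ∀ᶠ k in atTop, x ∈ S k) (m : ℕ) : ∃ k ≥ m, m ≤ ℓ k := by
  by_contra! hℓ
  refine hR_ne m (eq_univ_of_forall fun x => ?_)
  obtain ⟨k, hxk, hkm⟩ := ((hS_cof x).and (eventually_ge_atTop m)).exists
  exact hR_mono (hℓ k hkm).le (hS k hxk)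

theorem GammaSpace.exists_seq_mem_of_isOmegaCover (hX : GammaSpace X) {R : ℕ → Set X}
    (hR_open : ∀ n, IsOpen (R n)) (hR_mono : Monotone R) (hR_ne : ∀ n, R n ≠ univ)
    (hR : ∀ x, ∀ᶠ n in atTop, x ∈ R n) {𝒱 : ℕ → Set (Set X)} (h𝒱 : ∀ i, IsOmegaCover (𝒱 i)) :
    ∃ V : ℕ → Set X, (∀ n, V n ∈ 𝒱 n) ∧ ∀ x, ∀ᶠ n in atTop, x ∈ V n := by
  obtain ⟨S, hS, hS_cof⟩ := hX _ (isOmegaCover_levelCover hR_open hR_ne hR h𝒱)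
  choose ℓ V hV hSV using hS
  choose t ht hℓt using exists_ge_level_le hR_mono hR_ne
    (fun k => (hSV k).trans_subset inter_subset_left) hS_cof
  refine ⟨fun n => V (t n) n, fun n => hV (t n) n, fun x => ?_⟩
  filter_upwards [(tendsto_atTop_mono ht tendsto_id).eventually (hS_cof x)] with n hx
  rw [hSV (t n)] at hx
  exact mem_iInter₂.1 hx.2 n (hℓt n)

end

/-- Every γ-space is Hurewicz. -/
theorem gammaSpace_implies_hurewicz {X : Type*} [TopologicalSpace X]
    (hX : GammaSpace X) : HurewiczSpace X := by
  intro 𝒰 hopen hcov hnofin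
  have h𝒱 : ∀ n, IsOmegaCover (finiteUnions (𝒰 n)) := fun n =>
    isOmegaCover_finiteUnions (hopen n) (hcov n) (hnofin n)
  obtain ⟨R, hR_mono, hR𝒱, hR⟩ := hX.exists_monotone_eventually_mem (h𝒱 0)
    fun _ hS _ hT => union_mem_finiteUnions hS hT
  obtain ⟨V, hV, hV_cof⟩ := hX.exists_seq_mem_of_isOmegaCover
    (fun n => (h𝒱 0).2.1 _ (hR𝒱 n)) hR_mono (fun n hRn => (h𝒱 0).1 (hRn ▸ hR𝒱 n)) hR h𝒱
  choose F hF𝒰 hF hFV using hV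
  exact ⟨F, fun n => ⟨hF𝒰 n, hF n⟩, fun x => (hV_cof x).mono fun n hx => (hFV n).symm ▸ hx⟩
end

section
/- If f : X → Y is a perfect (proper, closed, continuous surjection with compact fibers) map, X × Z is a topological product, and X × Z → Y × Z is the induced map f × id, then if X × Z is Lindelöf, so is Y × Z. Consequently, if X is productively Lindelöf and f : X → Y is a continuous surjection, then Y is productively Lindelöf. -/
universe u

/-- `X` is productively Lindelöf: its product with every Lindelöf space is Lindelöf. -/
def ProductivelyLindelof (X : Type u) [TopologicalSpace X] : Prop :=
  ∀ (Z : Type u) [TopologicalSpace Z], LindelofSpace Z → LindelofSpace (X × Z)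

section

variable {X Y Z : Type*} [TopologicalSpace X] [TopologicalSpace Y] [TopologicalSpace Z]

theorem LindelofSpace.prod_left_of_continuous_surjective {f : X → Y} (hf : Continuous f)
    (hsurj : Function.Surjective f) [LindelofSpace (X × Z)] : LindelofSpace (Y × Z) :=
  LindelofSpace.of_continuous_surjective (hf.prodMap continuous_id)
    (hsurj.prodMap Function.surjective_id)

end

theorem ProductivelyLindelof.of_continuous_surjective {X Y : Type u} [TopologicalSpace X]
    [TopologicalSpace Y] {f : X → Y} (hf : Continuous f) (hsurj : Function.Surjective f)
    (hX : ProductivelyLindelof X) : ProductivelyLindelof Y := fun Z _ hZ =>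
  haveI := hX Z hZ
  LindelofSpace.prod_left_of_continuous_surjective hf hsurj

/-- If `f : X → Y` is a perfect map then `X × Z` Lindelöf implies `Y × Z` Lindelöf;
consequently continuous surjective images of productively Lindelöf spaces are
productively Lindelöf. -/
theorem perfect_image_lindelof_product :
    (∀ (X Y Z : Type u) [TopologicalSpace X] [TopologicalSpace Y] [TopologicalSpace Z]
      (f : X → Y), Continuous f → Function.Surjective f → IsClosedMap f →
      (∀ y : Y, IsCompact (f ⁻¹' {y})) →
      LindelofSpace (X × Z) → LindelofSpace (Y × Z)) ∧
    (∀ (X Y : Type u) [TopologicalSpace X] [TopologicalSpace Y] (f : X → Y),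
      Continuous f → Function.Surjective f →
      ProductivelyLindelof X → ProductivelyLindelof Y) :=
  ⟨fun _ _ _ _ _ _ _ hf hsurj _ _ _ => LindelofSpace.prod_left_of_continuous_surjective hf hsurj,
    fun _ _ _ _ _ hf hsurj hX => hX.of_continuous_surjective hf hsurj⟩
end

section
/- Let the Michael topology on P(ω) be the topology refining the Cantor topology (via characteristic functions) by declaring every infinite subset of ω isolated. Suppose [ω]^{<ω} ⊆ Y ⊆ P(ω), Y is countable, and 𝒰 is a family of open subsets of P(ω) (Michael topology) such that each finite subset of Y is included in some member of 𝒰. Then there exist m₀ < m₁ < ⋯ in ω and U₀, U₁, ⋯ ∈ 𝒰 (not necessarily distinct) such that: (1) each y ∈ Y belongs to Uₙ for all but finitely many n; and (2) for every x ⊆ ω, if x ∩ (mₙ, mₙ₊₁) = ∅ then x ∈ Uₙ. -/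
/-- The Cantor topology on `P(ω)`: induced, via characteristic functions, from the
product of discrete topologies on `ℕ → Prop`. -/
def cantorTop : TopologicalSpace (Set ℕ) :=
  TopologicalSpace.induced (fun x : Set ℕ => fun n : ℕ => n ∈ x)
    (Pi.topologicalSpace (t₂ := fun _ => ⊥))

/-- The Michael topology on `P(ω)`: the Cantor topology refined by declaring every
infinite subset of `ω` isolated. -/
def michaelTop : TopologicalSpace (Set ℕ) :=
  TopologicalSpace.generateFrom
    ({S | cantorTop.IsOpen S} ∪ {S | ∃ x : Set ℕ, x.Infinite ∧ S = {x}})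

/-!
Enumerate `Y` as `e 0, e 1, …`. A finite point of `P(ω)` has the same neighbourhoods in the
Michael and the Cantor topology, so a Michael-open `U` containing every subset of `[0, m]`
contains a Cantor cylinder around each of these finitely many points. Hence there is `k > m`
such that every `x` missing `(m, k)` lies in `U`, since such an `x` agrees below `k` with
`x ∩ [0, m]`. Taking `Uₙ ∈ 𝒰` to contain `e 0, …, e n` and all subsets of `[0, mₙ]`, and
`mₙ₊₁` to be such a `k`, gives both properties.
-/

open Set Filter Topology PiNat

def cantorCylinder (a : Set ℕ) (k : ℕ) : Set (Set ℕ) := {z | ∀ i < k, (i ∈ z ↔ i ∈ a)}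

lemma cantorCylinder_anti (a : Set ℕ) {k k' : ℕ} (h : k ≤ k') :
    cantorCylinder a k' ⊆ cantorCylinder a k := fun _ hz i hi => hz i (hi.trans_le h)

lemma exists_cantorCylinder_subset {U : Set (Set ℕ)} {a : Set ℕ}
    (hU : U ∈ @nhds _ cantorTop a) : ∃ k, cantorCylinder a k ⊆ U := by
  let : TopologicalSpace Prop := ⊥
  have : DiscreteTopology Prop := ⟨rfl⟩
  rw [cantorTop, nhds_induced] at hU
  obtain ⟨V, hV, hVU⟩ := hU
  obtain ⟨_, ⟨x, k, rfl⟩, hax, hxV⟩ := (isTopologicalBasis_cylinders _).mem_nhds_iff.1 hV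
  refine ⟨k, fun z hz => hVU (hxV ?_)⟩
  rw [← mem_cylinder_iff_eq.1 hax]
  exact mem_cylinder_iff.2 fun i hi => propext (hz i hi)

lemma michaelTop_nhds_eq_of_finite {a : Set ℕ} (ha : a.Finite) :
    @nhds _ michaelTop a = @nhds _ cantorTop a := by
  have hsplit : michaelTop = cantorTop ⊓ TopologicalSpace.generateFrom
      {S | ∃ x : Set ℕ, x.Infinite ∧ S = {x}} := by
    rw [michaelTop, generateFrom_union]
    exact congrArg (· ⊓ _) (TopologicalSpace.generateFrom_setOfPred_isOpen cantorTop)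
  have htop : ⨅ s ∈ {s | a ∈ s ∧ s ∈ {S | ∃ x : Set ℕ, x.Infinite ∧ S = {x}}}, 𝓟 s = ⊤ := by
    refine iInf₂_eq_top.2 ?_
    rintro s ⟨has, x, hx, rfl⟩
    exact absurd (mem_singleton_iff.1 has ▸ ha) hx
  rw [hsplit, nhds_inf, TopologicalSpace.nhds_generateFrom, htop, inf_top_eq]

lemma exists_gt_forall_inter_Ioo_eq_empty_mem {U : Set (Set ℕ)} (hU : michaelTop.IsOpen U)
    {m : ℕ} (hmU : 𝒫 Iic m ⊆ U) : ∃ k, m < k ∧ ∀ x : Set ℕ, x ∩ Ioo m k = ∅ → x ∈ U := by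
  have hcyl : ∀ a ∈ 𝒫 Iic m, ∀ᶠ k in atTop, cantorCylinder a k ⊆ U := fun a ha => by
    have hUa : U ∈ @nhds _ michaelTop a := @IsOpen.mem_nhds _ michaelTop _ _ hU (hmU ha)
    obtain ⟨k, hk⟩ := exists_cantorCylinder_subset
      (michaelTop_nhds_eq_of_finite ((finite_Iic m).subset ha) ▸ hUa)
    exact eventually_atTop.2 ⟨k, fun k' hk' => (cantorCylinder_anti a hk').trans hk⟩
  obtain ⟨k, hmk, hk⟩ := ((eventually_gt_atTop m).and
    ((eventually_all_finite (finite_Iic m).powerset).2 hcyl)).exists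
  refine ⟨k, hmk, fun x hx => hk (x ∩ Iic m) inter_subset_right fun i hi => ?_⟩
  rcases le_or_gt i m with him | him
  · simp [him]
  · have hix : i ∉ x := fun hix => eq_empty_iff_forall_notMem.1 hx i ⟨hix, him, hi⟩
    simp [hix, him.not_ge]

lemma exists_strictMono_of_forall_exists_gt {P : ℕ → ℕ → ℕ → Prop}
    (h : ∀ n m, ∃ k, m < k ∧ P n m k) :
    ∃ M : ℕ → ℕ, StrictMono M ∧ ∀ n, P n (M n) (M (n + 1)) := by
  choose g hg using h
  let M : ℕ → ℕ := fun n => Nat.rec 0 (fun j ih => g j ih) n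
  exact ⟨M, strictMono_nat_of_lt_succ fun n => (hg n (M n)).1, fun n => (hg n (M n)).2⟩

/-- Galvin–Miller type lemma for the Michael topology. -/
theorem galvin_miller_michael
    (Y : Set (Set ℕ)) (hfin : {s : Set ℕ | s.Finite} ⊆ Y) (hY : Y.Countable)
    (𝒰 : Set (Set (Set ℕ))) (hop : ∀ U ∈ 𝒰, michaelTop.IsOpen U)
    (hcov : ∀ F : Set (Set ℕ), F ⊆ Y → F.Finite → ∃ U ∈ 𝒰, F ⊆ U) :
    ∃ m : ℕ → ℕ, StrictMono m ∧
      ∃ U : ℕ → Set (Set ℕ), (∀ n, U n ∈ 𝒰) ∧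
        (∀ y ∈ Y, ∀ᶠ n in Filter.atTop, y ∈ U n) ∧
        (∀ x : Set ℕ, ∀ n : ℕ, x ∩ Set.Ioo (m n) (m (n + 1)) = ∅ → x ∈ U n) := by
  obtain ⟨e, rfl⟩ := hY.exists_eq_range ⟨∅, hfin finite_empty⟩
  have hV : ∀ n m : ℕ, ∃ U ∈ 𝒰, e '' Iic n ∪ 𝒫 Iic m ⊆ U := fun n m =>
    hcov _ (union_subset (image_subset_range _ _) fun a ha => hfin ((finite_Iic m).subset ha))
      (((finite_Iic n).image e).union (finite_Iic m).powerset)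
  choose V hV𝒰 hVY using hV
  obtain ⟨M, hM, hgap⟩ := exists_strictMono_of_forall_exists_gt fun n m =>
    exists_gt_forall_inter_Ioo_eq_empty_mem (hop _ (hV𝒰 n m))
      (subset_union_right.trans (hVY n m))
  refine ⟨M, hM, fun n => V n (M n), fun n => hV𝒰 n (M n), ?_, fun x n => hgap n x⟩
  rintro _ ⟨i, rfl⟩
  exact eventually_atTop.2 ⟨i, fun n hn => hVY n (M n) (Or.inl (mem_image_of_mem e hn))⟩
end

section
/- Let X ⊆ P(ω) (with the Michael topology) consist of the finite subsets of ω together with an uncountable ⊆*-decreasing family {x_α : α < ω₁} of infinite subsets of ω. Then the set {(x_α, x_α) : α < ω₁} is closed and discrete in the product X × [ω]^ω, where [ω]^ω carries the Cantor (subspace) topology. In particular, if ω₁ is uncountable this product is not Lindelöf. -/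
open Cardinal

/-- The index set `ω₁`: ordinals below the first uncountable ordinal. -/
def Omega1 : Type 1 := {α : Ordinal.{0} // α < (Cardinal.aleph 1).ord}

noncomputable instance : LinearOrder Omega1 := Subtype.instLinearOrder _

/-- `X = [ω]^{<ω} ∪ {x_α : α < ω₁}`, as a subspace of `P(ω)` with the Michael topology. -/
def MichaelX (x : Omega1 → Set ℕ) : Type :=
  {s : Set ℕ // s.Finite ∨ s ∈ Set.range x}

instance (x : Omega1 → Set ℕ) : TopologicalSpace (MichaelX x) :=
  michaelTop.induced Subtype.val

/-- `[ω]^ω` with the Cantor subspace topology (a copy of the irrationals). -/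
def InfSets : Type := {s : Set ℕ // s.Infinite}

instance : TopologicalSpace InfSets := cantorTop.induced Subtype.val

/-
The diagonal is `{(s, t) | s = t}`, since a finite set never equals an infinite one.
It is closed because both coordinate maps are continuous into the Hausdorff Cantor topology,
and discrete because its points have an infinite, hence Michael-isolated, first coordinate.
An injective ω₁-family makes it uncountable, and an uncountable closed discrete set
rules out the Lindelöf property.
-/

theorem t2Space_cantorTop : @T2Space (Set ℕ) cantorTop := by
  let : TopologicalSpace Prop := ⊥
  have : DiscreteTopology Prop := ⟨rfl⟩
  let := cantorTop
  exact .of_injective_continuous (f := fun (s : Set ℕ) (n : ℕ) => n ∈ s)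
    (fun _ _ h => Set.ext fun n => iff_of_eq (congrFun h n)) continuous_induced_dom

theorem michaelTop_le_cantorTop : michaelTop ≤ cantorTop :=
  fun S hS => TopologicalSpace.GenerateOpen.basic S (Or.inl hS)

theorem michaelTop_isOpen_singleton {s : Set ℕ} (hs : s.Infinite) : michaelTop.IsOpen {s} :=
  TopologicalSpace.GenerateOpen.basic _ (Or.inr ⟨s, hs, rfl⟩)

theorem Omega1.not_countable : ¬ Countable Omega1 := by
  rw [← mk_le_aleph0_iff, not_le]
  have hcard : #Omega1 = lift.{1, 0} ℵ₁ := by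
    have h := mk_Iio_ordinal (ℵ₁ : Cardinal.{0}).ord
    rwa [card_ord] at h
  rw [hcard, ← lift_aleph0.{1, 0}, lift_lt]
  exact aleph0_lt_aleph_one

section Diagonal

variable (x : Omega1 → Set ℕ)

theorem setOf_exists_eq_eq_setOf_val_eq :
    {p : MichaelX x × InfSets | ∃ α, p.1.val = x α ∧ p.2.val = x α} =
      {p | p.1.val = p.2.val} := by
  ext ⟨⟨s, hs⟩, ⟨t, ht⟩⟩
  simp only [Set.mem_ofPred_eq]
  constructor
  · rintro ⟨α, rfl, rfl⟩
    rfl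
  · rintro rfl
    obtain ⟨α, rfl⟩ := hs.resolve_left ht
    exact ⟨α, rfl, rfl⟩

theorem isClosed_setOf_val_eq : IsClosed {p : MichaelX x × InfSets | p.1.val = p.2.val} := by
  let := cantorTop
  have := t2Space_cantorTop
  have hX : Continuous fun s : MichaelX x => s.val :=
    continuous_le_rng michaelTop_le_cantorTop (continuous_induced_dom (t := michaelTop))
  have hInf : Continuous fun t : InfSets => t.val := continuous_induced_dom
  exact isClosed_eq (hX.comp continuous_fst) (hInf.comp continuous_snd)

theorem isDiscrete_setOf_val_eq : IsDiscrete {p : MichaelX x × InfSets | p.1.val = p.2.val} := by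
  refine isDiscrete_iff_forall_mem_exists_isOpen.2 fun p hp => ?_
  refine ⟨Prod.fst ⁻¹' (Subtype.val ⁻¹' {p.1.val}), ?_, ?_⟩
  · have hinf : p.1.val.Infinite := hp ▸ p.2.property
    exact continuous_fst.isOpen_preimage _ ⟨_, michaelTop_isOpen_singleton hinf, rfl⟩
  · ext q
    simp only [Set.mem_inter_iff, Set.mem_preimage, Set.mem_singleton_iff, Set.mem_ofPred_eq]
    constructor
    · rintro ⟨h1, h2⟩
      exact Prod.ext (Subtype.ext h1) (Subtype.ext (h2.symm.trans (h1.trans hp)))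
    · rintro rfl
      exact ⟨rfl, hp⟩

theorem not_countable_setOf_val_eq (hinf : ∀ α, (x α).Infinite) (hinj : Function.Injective x) :
    ¬ {p : MichaelX x × InfSets | p.1.val = p.2.val}.Countable := by
  let diag : Omega1 → MichaelX x × InfSets := fun α => (⟨x α, .inr ⟨α, rfl⟩⟩, ⟨x α, hinf α⟩)
  have hmaps : Set.MapsTo diag Set.univ {p | p.1.val = p.2.val} := fun _ _ => rfl
  have hinjOn : Set.InjOn diag Set.univ := fun α _ β _ h =>
    hinj (congrArg (fun p : MichaelX x × InfSets => p.1.val) h)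
  exact fun hc => Omega1.not_countable
    (Set.countable_univ_iff.1 (hmaps.countable_of_injOn hinjOn hc))

end Diagonal

theorem michael_diagonal_closed_discrete_general (x : Omega1 → Set ℕ)
    (hinf : ∀ α, (x α).Infinite) (hinj : Function.Injective x) :
    IsClosed {p : MichaelX x × InfSets | ∃ α, p.1.val = x α ∧ p.2.val = x α} ∧
    (∀ p ∈ {p : MichaelX x × InfSets | ∃ α, p.1.val = x α ∧ p.2.val = x α},
      ∃ U : Set (MichaelX x × InfSets), IsOpen U ∧
        U ∩ {p : MichaelX x × InfSets | ∃ α, p.1.val = x α ∧ p.2.val = x α} = {p}) ∧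
    ¬ LindelofSpace (MichaelX x × InfSets) := by
  rw [setOf_exists_eq_eq_setOf_val_eq, ← isDiscrete_iff_forall_mem_exists_isOpen]
  have hclosed := isClosed_setOf_val_eq x
  have hdiscrete := isDiscrete_setOf_val_eq x
  exact ⟨hclosed, hdiscrete, fun _ => not_countable_setOf_val_eq x hinf hinj
    (hclosed.isLindelof.countable_of_isDiscrete hdiscrete)⟩

/-- For a `⊆*`-decreasing ω₁-family of infinite subsets of `ω`, the diagonal set
`{(x_α, x_α)}` is closed and discrete in `X × [ω]^ω`; in particular this product
is not Lindelöf. -/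
theorem michael_diagonal_closed_discrete (x : Omega1 → Set ℕ)
    (hinf : ∀ α, (x α).Infinite) (hinj : Function.Injective x)
    (hdec : ∀ α β : Omega1, α < β → (x β \ x α).Finite) :
    IsClosed {p : MichaelX x × InfSets | ∃ α, p.1.val = x α ∧ p.2.val = x α} ∧
    (∀ p ∈ {p : MichaelX x × InfSets | ∃ α, p.1.val = x α ∧ p.2.val = x α},
      ∃ U : Set (MichaelX x × InfSets), IsOpen U ∧
        U ∩ {p : MichaelX x × InfSets | ∃ α, p.1.val = x α ∧ p.2.val = x α} = {p}) ∧
    ¬ LindelofSpace (MichaelX x × InfSets) :=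
  michael_diagonal_closed_discrete_general x hinf hinj
end

section
/- Assume b = ℵ₁ (the minimal cardinality of an unbounded family in ω^ω under ≤* is ℵ₁). Then there is an unbounded family {x_α : α < ω₁} of infinite subsets of ω such that x_β ⊆* x_α whenever α < β < ω₁. -/
open Cardinal

/-- A family of functions is unbounded if no `g` eventually dominates all its members. -/
def UnboundedFamily (B : Set (ℕ → ℕ)) : Prop :=
  ¬ ∃ g : ℕ → ℕ, ∀ f ∈ B, ∀ᶠ n in Filter.atTop, f n ≤ g n

/-! Enumerate the unbounded family as `fᵅ`, `α < ω₁`, and build the sets `x α` by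
transfinite recursion. At stage `α` only countably many sets `x β`, `β < α`, have been built and
they form a `⊆*`-chain, so the finite intersections along an enumeration of them are infinite;
picking one point from the `n`-th intersection above `fᵅ n`, increasingly in `n`, gives an infinite
pseudo-intersection whose enumeration dominates `fᵅ`. The unboundedness of the `fᵅ` then passes
to the enumerations of the `x α`. -/

lemma Nat.nth_mem_range_of_strictMono {a : ℕ → ℕ} (ha : StrictMono a) (n : ℕ) :
    Nat.nth (· ∈ Set.range a) n = a n := by
  have := Nat.nth_comp_of_strictMono (p := (· ∈ Set.range a)) (n := n) ha (fun _ hk => hk)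
    fun hfin => absurd hfin (Set.infinite_range_of_injective ha.injective)
  simpa using this.symm

lemma exists_strictMono_forall_mem_and_le {t : ℕ → Set ℕ} (ht : ∀ n, (t n).Infinite)
    (f : ℕ → ℕ) : ∃ a : ℕ → ℕ, StrictMono a ∧ ∀ n, a n ∈ t n ∧ f n ≤ a n :=
  Filter.extraction_forall_of_frequently fun n =>
    (Nat.frequently_atTop_iff_infinite.2 (ht n)).and_eventually (Filter.eventually_ge_atTop _)

lemma infinite_biInter_of_almost_antitone {α κ : Type*} [Infinite α] [LinearOrder κ]
    {F : κ → Set α} (hinf : ∀ i, (F i).Infinite)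
    (hF : ∀ i j, i < j → (F j \ F i).Finite) {s : Set κ} (hs : s.Finite) :
    (⋂ i ∈ s, F i).Infinite := by
  rcases s.eq_empty_or_nonempty with rfl | hne
  · simpa using Set.infinite_univ
  obtain ⟨m, -, hmax⟩ := s.exists_max_image id hs hne
  have hfin : (⋃ i ∈ s, F m \ F i).Finite := hs.biUnion fun i hi =>
    (hmax i hi).lt_or_eq.elim (hF i m) fun h => by simp [show i = m from h]
  refine ((hinf m).sdiff hfin).mono fun k hk => Set.mem_iInter₂.2 fun i hi => ?_
  by_contra hki
  exact hk.2 (Set.mem_biUnion hi ⟨hk.1, hki⟩)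

def IsDominatingPseudoIntersection {κ : Type*} (F : κ → Set ℕ) (f : ℕ → ℕ) (y : Set ℕ) : Prop :=
  y.Infinite ∧ (∀ i, (y \ F i).Finite) ∧ ∀ n, f n ≤ Nat.nth (· ∈ y) n

lemma exists_isDominatingPseudoIntersection {κ : Type*} [LinearOrder κ] [Countable κ]
    {F : κ → Set ℕ} (hinf : ∀ i, (F i).Infinite) (hF : ∀ i j, i < j → (F j \ F i).Finite)
    (f : ℕ → ℕ) : ∃ y, IsDominatingPseudoIntersection F f y := by
  obtain ⟨e, he⟩ := Countable.exists_injective_nat κ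
  have hfin : ∀ n, {i | e i ≤ n}.Finite := fun n => (Set.finite_Iic n).preimage he.injOn
  obtain ⟨a, ha, hat⟩ := exists_strictMono_forall_mem_and_le
    (t := fun n => ⋂ i ∈ {i | e i ≤ n}, F i)
    (fun n => infinite_biInter_of_almost_antitone hinf hF (hfin n)) f
  refine ⟨Set.range a, Set.infinite_range_of_injective ha.injective, fun i => ?_, fun n => ?_⟩
  · refine ((Set.finite_Iio (e i)).image a).subset ?_
    rintro _ ⟨⟨n, rfl⟩, hn⟩
    refine ⟨n, Set.mem_Iio.2 <| not_le.1 fun hin => hn ?_, rfl⟩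
    exact Set.mem_iInter₂.1 (hat n).1 i hin
  · rw [Nat.nth_mem_range_of_strictMono ha]
    exact (hat n).2

section Scale

variable {ι : Type*} [LinearOrder ι] [WellFoundedLT ι]

noncomputable def dominatingScale (f : ι → ℕ → ℕ) : ι → Set ℕ :=
  wellFounded_lt.fix fun α x => Classical.epsilon <|
    IsDominatingPseudoIntersection (fun β : Set.Iio α => x β β.2) (f α)

lemma isDominatingPseudoIntersection_dominatingScale (hι : ∀ α : ι, (Set.Iio α).Countable)
    (f : ι → ℕ → ℕ) (α : ι) :
    IsDominatingPseudoIntersection (fun β : Set.Iio α => dominatingScale f β) (f α)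
      (dominatingScale f α) := by
  induction α using WellFoundedLT.induction with
  | _ α ih =>
    have := (hι α).to_subtype
    rw [dominatingScale, WellFounded.fix_eq]
    exact Classical.epsilon_spec <| exists_isDominatingPseudoIntersection
      (F := fun β : Set.Iio α => dominatingScale f β) (fun β => (ih β β.2).1)
      (fun β γ hβγ => (ih γ γ.2).2.1 ⟨β, hβγ⟩) (f α)

end Scale

namespace Omega1

instance : WellFoundedLT Omega1 := Subtype.wellFoundedLT _

lemma countable_Iio (α : Omega1) : (Set.Iio α).Countable := by
  have hα : (Set.Iio α.1).Countable := by
    rw [← le_aleph0_iff_set_countable, mk_Iio_ordinal, lift_le_aleph0, ← lt_aleph_one_iff,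
      ← lt_ord]
    exact α.2
  exact hα.preimage Subtype.val_injective

lemma nonempty_equiv_of_mk_eq_aleph_one {β : Type} (hβ : #β = aleph 1) :
    Nonempty (Omega1 ≃ β) := by
  rw [← lift_mk_eq'.{1, 0}, hβ, lift_uzero]
  show #(Set.Iio (aleph 1).ord) = _
  rw [mk_Iio_ordinal, card_ord]

end Omega1

/-- If `𝔟 = ℵ₁` (there is an unbounded family of size `ℵ₁`), then there is an unbounded
`⊆*`-decreasing `ω₁`-scale of infinite subsets of `ω`. -/
theorem exists_unbounded_subset_decreasing_scale
    (hb : ∃ B : Set (ℕ → ℕ), #B = aleph 1 ∧ UnboundedFamily B) :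
    ∃ x : Omega1 → Set ℕ, (∀ α, (x α).Infinite) ∧
      (¬ ∃ g : ℕ → ℕ, ∀ α : Omega1,
        ∀ᶠ n in Filter.atTop, Nat.nth (· ∈ x α) n ≤ g n) ∧
      (∀ α β : Omega1, α < β → (x β \ x α).Finite) := by
  obtain ⟨B, hBcard, hB⟩ := hb
  obtain ⟨e⟩ := Omega1.nonempty_equiv_of_mk_eq_aleph_one hBcard
  have hx := isDominatingPseudoIntersection_dominatingScale Omega1.countable_Iio
    fun α => (e α : ℕ → ℕ)
  refine ⟨dominatingScale _, fun α => (hx α).1, ?_, fun α β hαβ => (hx β).2.1 ⟨α, hαβ⟩⟩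
  rintro ⟨g, hg⟩
  refine hB ⟨g, fun f hf => ?_⟩
  simpa using (hg (e.symm ⟨f, hf⟩)).mono fun n hn => ((hx _).2.2 n).trans hn
end

section
/- If X is a Hausdorff space such that X^ω (countable power) is Menger, then X is compact. -/
/-!
A diagonal argument: if an open cover `U` of `X` had no finite subcover, pull it back along
every coordinate projection of `ℕ → X`. The Menger property yields finite index sets `tₙ`
such that the sets `{f | f n ∈ U i}`, `i ∈ tₙ`, together cover `ℕ → X`; but a point whose
`n`-th coordinate lies outside `⋃ i ∈ tₙ, U i` for every `n` is not covered.
-/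

/-- `X` is Menger: for every sequence of open covers there are finite subfamilies
whose unions form a cover. -/
def MengerSpace (X : Type*) [TopologicalSpace X] : Prop :=
  ∀ 𝒰 : ℕ → Set (Set X),
    (∀ n, ∀ S ∈ 𝒰 n, IsOpen S) → (∀ n, ⋃₀ 𝒰 n = Set.univ) →
    ∃ F : ℕ → Set (Set X), (∀ n, F n ⊆ 𝒰 n ∧ (F n).Finite) ∧
      ∀ x : X, ∃ n, x ∈ ⋃₀ F n

open Set

theorem Set.exists_finset_image_eq_of_subset_range {α β : Type*} {f : α → β} {s : Set β}
    (hs : s ⊆ range f) (hfin : s.Finite) : ∃ t : Finset α, f '' t = s := by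
  obtain ⟨t, -, ht, rfl⟩ :=
    exists_subset_image_finite_and.mp ⟨s, image_univ (f := f) ▸ hs, hfin, rfl⟩
  exact ⟨ht.toFinset, by simp⟩

theorem MengerSpace.exists_finset_cover {Y ι : Type*} [TopologicalSpace Y] (h : MengerSpace Y)
    (U : ℕ → ι → Set Y) (hU : ∀ n i, IsOpen (U n i)) (hcov : ∀ n, ⋃ i, U n i = univ) :
    ∃ t : ℕ → Finset ι, ∀ y, ∃ n, ∃ i ∈ t n, y ∈ U n i := by
  obtain ⟨F, hF, hFcov⟩ := h (fun n => range (U n)) (by rintro n _ ⟨i, rfl⟩; exact hU n i)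
    (fun n => by rw [sUnion_range, hcov n])
  choose t ht using fun n => exists_finset_image_eq_of_subset_range (hF n).1 (hF n).2
  refine ⟨t, fun y => ?_⟩
  obtain ⟨n, S, hS, hyS⟩ := hFcov y
  rw [← ht n] at hS
  obtain ⟨i, hi, rfl⟩ := hS
  exact ⟨n, i, hi, hyS⟩

theorem compact_of_menger_omega_power_general {X : Type*} [TopologicalSpace X]
    (hX : MengerSpace (ℕ → X)) : CompactSpace X := by
  refine isCompact_univ_iff.mp (isCompact_of_finite_subcover fun U hU hcov => ?_)
  by_contra! hfin
  obtain ⟨t, ht⟩ := hX.exists_finset_cover (fun n i => (fun f : ℕ → X => f n) ⁻¹' U i)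
    (fun n i => (hU i).preimage (continuous_apply n))
    (fun n => by rw [← preimage_iUnion, univ_subset_iff.mp hcov, preimage_univ])
  choose x hx using fun n => not_subset.mp (hfin (t n))
  obtain ⟨n, i, hi, hxi⟩ := ht x
  exact (hx n).2 (mem_biUnion hi hxi)

/-- If the countable power of a Hausdorff space is Menger, the space is compact. -/
theorem compact_of_menger_omega_power {X : Type*} [TopologicalSpace X] [T2Space X]
    (hX : MengerSpace (ℕ → X)) : CompactSpace X :=
  compact_of_menger_omega_power_general hX
end
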